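/- Let F(m) = (−s(m)/β − m²/2) − (−s(m_β)/β − m_β²/2) with β > 1, s the lattice-gas entropy, and m_β ∈ (0,1) the positive root of m = tanh(βm). Let n = −m_β + δ with δ > 0 small, and G(ω) = F(n+ω) − F(n) − F'(n)ω for ω ∈ [−1−n, 1−n]. Then the equation G(ω) = 0 has exactly three solutions 0 < ω₋ < ω₊, G(ω) < 0 exactly on (ω₋, ω₊), and there is a constant c depending only on β such that |ω₋ − 2m_β| ≤ c√δ and |ω₊ − 2m_β| ≤ c√δ for all sufficiently small δ. -/

import Mathlib

/-!
Write `φ = F'`, so `φ m = artanh m / β - m` and `F'' m = (β (1 - m²))⁻¹ - 1`, which changes sign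
exactly at `|m| = a = √(1 - 1/β)`; the fixed-point equation forces `a < m_β`. As
`G'(ω) = φ(n+ω) - φ(n)` and `G''(ω) = F''(n+ω)`, `G` is strictly convex where `|n+ω| > a` and
concave where `|n+ω| < a`. On `n+ω ≤ -a` this makes `ω = 0` the strict minimum of `G`, and
concavity keeps `G > 0` up to `n+ω = a`. On `n+ω ≥ a`, `G` is strictly convex, positive at both
ends and negative at `n+ω = -n = m_β - δ` (there `F(n+ω) = F(n)` by evenness), so it has exactly
two zeros there. Finally `0 < φ(n) ≤ F''(m_β) δ` and `F(n) ≤ φ(n) δ`, so at a zero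
`F(n+ω) ≤ 2 F''(m_β) δ`; since `F` is uniformly convex near `m_β` and decreasing on `[a, m_β]`,
this puts `n+ω` within `O(√δ)` of `m_β`.
-/

open Real

/-- Lattice-gas entropy. -/
noncomputable def latticeEntropy (m : ℝ) : ℝ :=
  -((1 - m) / 2) * Real.log ((1 - m) / 2) - ((1 + m) / 2) * Real.log ((1 + m) / 2)

/-- The GLP double-well potential `F`, normalized so `F(±m_β) = 0`. -/
noncomputable def glpF (β mβ m : ℝ) : ℝ :=
  (-(latticeEntropy m) / β - m ^ 2 / 2) - (-(latticeEntropy mβ) / β - mβ ^ 2 / 2)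

/-- The tilted potential `G(ω) = F(n+ω) − F(n) − F'(n)·ω`. -/
noncomputable def glpG (β mβ n ω : ℝ) : ℝ :=
  glpF β mβ (n + ω) - glpF β mβ n - deriv (glpF β mβ) n * ω

open Set

lemma strictConvexOn_of_hasDerivAt {D : Set ℝ} (hD : Convex ℝ D) {f f' : ℝ → ℝ}
    (hf : ContinuousOn f D) (hf' : ∀ x ∈ interior D, HasDerivAt f (f' x) x)
    (hmono : StrictMonoOn f' (interior D)) : StrictConvexOn ℝ D f :=
  (hmono.congr fun x hx => (hf' x hx).deriv.symm).strictConvexOn_of_deriv hD hf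

lemma strictConcaveOn_of_hasDerivAt {D : Set ℝ} (hD : Convex ℝ D) {f f' : ℝ → ℝ}
    (hf : ContinuousOn f D) (hf' : ∀ x ∈ interior D, HasDerivAt f (f' x) x)
    (hanti : StrictAntiOn f' (interior D)) : StrictConcaveOn ℝ D f :=
  (hanti.congr fun x hx => (hf' x hx).deriv.symm).strictConcaveOn_of_deriv hD hf

lemma StrictConvexOn.lt_of_hasDerivAt_zero {S : Set ℝ} {f : ℝ → ℝ} {x y : ℝ}
    (hf : StrictConvexOn ℝ S f) (hx : x ∈ S) (hy : y ∈ S) (hxy : x ≠ y) (hd : HasDerivAt f 0 x) :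
    f x < f y := by
  rcases hxy.lt_or_gt with h | h
  · have := hf.lt_slope_of_hasDerivAt hx hy h hd
    rw [slope_def_field, lt_div_iff₀ (sub_pos.2 h)] at this
    linarith
  · have := hf.slope_lt_of_hasDerivAt hy hx h hd
    rw [slope_def_field, div_lt_iff₀ (sub_pos.2 h)] at this
    linarith

lemma image_sub_le_mul_sub_of_hasDerivAt {f f' : ℝ → ℝ} {a b C : ℝ} (hab : a ≤ b)
    (hf : ∀ x ∈ Icc a b, HasDerivAt f (f' x) x) (hC : ∀ x ∈ Icc a b, f' x ≤ C) :
    f b - f a ≤ C * (b - a) :=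
  (convex_Icc a b).image_sub_le_mul_sub_of_deriv_le
    (fun x hx => (hf x hx).continuousAt.continuousWithinAt)
    (fun x hx => (hf x (interior_subset hx)).differentiableAt.differentiableWithinAt)
    (fun x hx => (hf x (interior_subset hx)).deriv ▸ hC x (interior_subset hx))
    a (left_mem_Icc.2 hab) b (right_mem_Icc.2 hab) hab

lemma StrictConvexOn.exists_zeros_of_neg {f : ℝ → ℝ} {p q r : ℝ}
    (hf : StrictConvexOn ℝ (Icc p q) f) (hc : ContinuousOn f (Icc p q)) (hp : 0 < f p)
    (hq : 0 < f q) (hr : r ∈ Icc p q) (hfr : f r < 0) :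
    ∃ z₁ ∈ Ioo p r, ∃ z₂ ∈ Ioo r q, f z₁ = 0 ∧ f z₂ = 0 ∧ (∀ x ∈ Ioo z₁ z₂, f x < 0) ∧
      ∀ x ∈ Icc p q, x < z₁ ∨ z₂ < x → 0 < f x := by
  have hpr : p < r := hr.1.lt_of_ne (by rintro rfl; linarith)
  have hrq : r < q := hr.2.lt_of_ne (by rintro rfl; linarith)
  obtain ⟨z₁, hz₁, hf₁⟩ :=
    intermediate_value_Ioo' hpr.le (hc.mono (Icc_subset_Icc_right hr.2)) ⟨hfr, hp⟩
  obtain ⟨z₂, hz₂, hf₂⟩ :=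
    intermediate_value_Ioo hrq.le (hc.mono (Icc_subset_Icc_left hr.1)) ⟨hfr, hq⟩
  have hmax : ∀ u ∈ Icc p q, ∀ v ∈ Icc p q, ∀ x ∈ Ioo u v, f x < max (f u) (f v) :=
    fun u hu v hv x hx =>
      hf.lt_on_openSegment hu hv (hx.1.trans hx.2).ne
        (by rwa [openSegment_eq_Ioo (hx.1.trans hx.2)])
  have hz₁' : z₁ ∈ Icc p q := ⟨hz₁.1.le, hz₁.2.le.trans hr.2⟩
  have hz₂' : z₂ ∈ Icc p q := ⟨hr.1.trans hz₂.1.le, hz₂.2.le⟩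
  refine ⟨z₁, hz₁, z₂, hz₂, hf₁, hf₂, fun x hx => ?_, fun x hx hout => ?_⟩
  · simpa [hf₁, hf₂] using hmax z₁ hz₁' z₂ hz₂' x hx
  · by_contra! hle
    rcases hout with h | h
    · have := hmax x hx r hr z₁ ⟨h, hz₁.2⟩
      rw [hf₁] at this
      exact this.not_ge (max_le hle hfr.le)
    · have := hmax r hr x hx z₂ ⟨hz₂.1, h⟩
      rw [hf₂] at this
      exact this.not_ge (max_le hfr.le hle)

lemma zeroSet_eq_and_neg_iff_mem_Ioo {g : ℝ → ℝ} {s : Set ℝ} {z₀ z₁ z₂ : ℝ}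
    (h₀ : z₀ ∈ s) (h₁ : z₁ ∈ s) (h₂ : z₂ ∈ s) (hg₀ : g z₀ = 0) (hg₁ : g z₁ = 0) (hg₂ : g z₂ = 0)
    (hneg : ∀ x ∈ Ioo z₁ z₂, g x < 0) (hpos : ∀ x ∈ s, x ≠ z₀ → x < z₁ ∨ z₂ < x → 0 < g x) :
    {x ∈ s | g x = 0} = {z₀, z₁, z₂} ∧ ∀ x ∈ s, (g x < 0 ↔ x ∈ Ioo z₁ z₂) := by
  have hle : ∀ x ∈ s, g x ≤ 0 → x = z₀ ∨ x ∈ Icc z₁ z₂ := by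
    intro x hx hgx
    by_contra! hne
    have := hpos x hx hne.1 (by by_contra! h; exact hne.2 h)
    linarith
  refine ⟨Set.ext fun x => ⟨fun ⟨hx, hgx⟩ => ?_, ?_⟩, fun x hx => ⟨fun hgx => ?_, hneg x⟩⟩
  · rcases hle x hx hgx.le with rfl | ⟨hx₁, hx₂⟩
    · exact Or.inl rfl
    rcases hx₁.eq_or_lt with rfl | hx₁
    · exact Or.inr (Or.inl rfl)
    rcases hx₂.eq_or_lt with rfl | hx₂
    · exact Or.inr (Or.inr rfl)
    exact absurd hgx (hneg x ⟨hx₁, hx₂⟩).ne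
  · rintro (rfl | rfl | rfl)
    exacts [⟨h₀, hg₀⟩, ⟨h₁, hg₁⟩, ⟨h₂, hg₂⟩]
  · rcases hle x hx hgx.le with rfl | ⟨hx₁, hx₂⟩
    · linarith
    exact ⟨hx₁.lt_of_ne (by rintro rfl; linarith), hx₂.lt_of_ne (by rintro rfl; linarith)⟩

lemma abs_sub_le_of_sq_le {κ L δ mβ ω : ℝ} (hκ : 0 < κ) (hδ : 0 < δ) (hδ1 : δ ≤ 1)
    (h : κ / 2 * (-mβ + δ + ω - mβ) ^ 2 ≤ 2 * L * δ) :
    |ω - 2 * mβ| ≤ (Real.sqrt (4 * L / κ) + 1) * Real.sqrt δ := by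
  have h₁ : |-mβ + δ + ω - mβ| ≤ Real.sqrt (4 * L / κ) * Real.sqrt δ := by
    rw [← Real.sqrt_mul' _ hδ.le, ← Real.sqrt_sq_eq_abs]
    refine Real.sqrt_le_sqrt ?_
    rw [div_mul_eq_mul_div, le_div_iff₀ hκ]
    linarith
  have h₂ : δ ≤ Real.sqrt δ := Real.le_sqrt_of_sq_le (by nlinarith)
  calc |ω - 2 * mβ| = |(-mβ + δ + ω - mβ) - δ| := by ring_nf
    _ ≤ |-mβ + δ + ω - mβ| + |δ| := abs_sub _ _
    _ ≤ (Real.sqrt (4 * L / κ) + 1) * Real.sqrt δ := by rw [abs_of_pos hδ]; linarith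

noncomputable def glpF' (β m : ℝ) : ℝ := (Real.log (1 + m) - Real.log (1 - m)) / (2 * β) - m

noncomputable def glpF'' (β m : ℝ) : ℝ := (β * (1 - m ^ 2))⁻¹ - 1

lemma latticeEntropy_eq_negMulLog (m : ℝ) :
    latticeEntropy m = Real.negMulLog ((1 - m) / 2) + Real.negMulLog ((1 + m) / 2) := by
  simp only [latticeEntropy, Real.negMulLog]; ring

lemma latticeEntropy_neg (m : ℝ) : latticeEntropy (-m) = latticeEntropy m := by
  rw [latticeEntropy_eq_negMulLog, latticeEntropy_eq_negMulLog, add_comm, sub_neg_eq_add,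
    ← sub_eq_add_neg]

lemma continuous_glpF (β mβ : ℝ) : Continuous (glpF β mβ) := by
  have : Continuous latticeEntropy := by simp only [funext latticeEntropy_eq_negMulLog]; fun_prop
  unfold glpF; fun_prop

lemma glpF_neg (β mβ m : ℝ) : glpF β mβ (-m) = glpF β mβ m := by
  simp only [glpF, latticeEntropy_neg, neg_sq]

lemma glpF_self (β mβ : ℝ) : glpF β mβ mβ = 0 := sub_self _

lemma glpF'_neg (β m : ℝ) : glpF' β (-m) = -glpF' β m := by
  simp only [glpF', sub_neg_eq_add, ← sub_eq_add_neg]; ring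

lemma hasDerivAt_latticeEntropy {m : ℝ} (hm : m ^ 2 < 1) :
    HasDerivAt latticeEntropy ((Real.log (1 - m) - Real.log (1 + m)) / 2) m := by
  have h₁ : 0 < 1 - m := by nlinarith
  have h₂ : 0 < 1 + m := by nlinarith
  have hS := ((Real.hasDerivAt_negMulLog (by positivity)).comp m
    (((hasDerivAt_id m).const_sub 1).div_const 2)).add
    ((Real.hasDerivAt_negMulLog (by positivity)).comp m
    (((hasDerivAt_id m).const_add 1).div_const 2))
  rw [funext latticeEntropy_eq_negMulLog]
  refine hS.congr_deriv ?_
  simp only [id, Real.log_div h₁.ne' two_ne_zero, Real.log_div h₂.ne' two_ne_zero]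
  ring

lemma hasDerivAt_glpF {β : ℝ} (hβ : β ≠ 0) (mβ : ℝ) {m : ℝ} (hm : m ^ 2 < 1) :
    HasDerivAt (glpF β mβ) (glpF' β m) m := by
  have := (((hasDerivAt_latticeEntropy hm).neg.div_const β).sub
    ((hasDerivAt_pow 2 m).div_const 2)).sub_const (-latticeEntropy mβ / β - mβ ^ 2 / 2)
  refine this.congr_deriv ?_
  simp only [glpF']
  field_simp
  ring

lemma hasDerivAt_glpF' {β : ℝ} (hβ : β ≠ 0) {m : ℝ} (hm : m ^ 2 < 1) :
    HasDerivAt (glpF' β) (glpF'' β m) m := by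
  have h₁ : 1 - m ≠ 0 := by nlinarith
  have h₂ : 1 + m ≠ 0 := by nlinarith
  have hlog := ((((hasDerivAt_id m).const_add 1).log h₂).sub
    (((hasDerivAt_id m).const_sub 1).log h₁)).div_const (2 * β)
  refine (hlog.sub (hasDerivAt_id m)).congr_deriv ?_
  have : 1 - m ^ 2 ≠ 0 := by nlinarith
  simp only [glpF'', id]
  field_simp
  ring

lemma glpF''_pos_iff {β m : ℝ} (hβ : 0 < β) (hm : m ^ 2 < 1) :
    0 < glpF'' β m ↔ 1 - β⁻¹ < m ^ 2 := by
  have hpos : 0 < β * (1 - m ^ 2) := by nlinarith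
  rw [glpF'', sub_pos, one_lt_inv₀ hpos, ← lt_div_iff₀' hβ, one_div]
  constructor <;> intro h <;> linarith

lemma glpF''_neg_iff {β m : ℝ} (hβ : 0 < β) (hm : m ^ 2 < 1) :
    glpF'' β m < 0 ↔ m ^ 2 < 1 - β⁻¹ := by
  have hpos : 0 < β * (1 - m ^ 2) := by nlinarith
  rw [glpF'', sub_neg, inv_lt_one₀ hpos, ← div_lt_iff₀' hβ, one_div]
  constructor <;> intro h <;> linarith

lemma glpF''_le_glpF'' {β m₁ m₂ : ℝ} (hβ : 0 < β) (h : m₁ ^ 2 ≤ m₂ ^ 2) (h₂ : m₂ ^ 2 < 1) :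
    glpF'' β m₁ ≤ glpF'' β m₂ := by
  have hpos : 0 < β * (1 - m₂ ^ 2) := by nlinarith
  rw [glpF'', glpF'', sub_le_sub_iff_right]
  exact inv_anti₀ hpos (by nlinarith)

lemma glpF'_eq_zero_of_eq_tanh {β mβ : ℝ} (hβ : β ≠ 0) (hroot : mβ = Real.tanh (β * mβ)) :
    glpF' β mβ = 0 := by
  set x := β * mβ with hx
  have hc : 0 < Real.cosh x := Real.cosh_pos x
  have h₁ : 1 + mβ = Real.exp x / Real.cosh x := by
    rw [hroot, Real.tanh_eq_sinh_div_cosh, ← Real.cosh_add_sinh]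
    field_simp
  have h₂ : 1 - mβ = Real.exp (-x) / Real.cosh x := by
    rw [hroot, Real.tanh_eq_sinh_div_cosh, ← Real.cosh_sub_sinh]
    field_simp
  rw [glpF', h₁, h₂, Real.log_div (Real.exp_ne_zero _) hc.ne',
    Real.log_div (Real.exp_ne_zero _) hc.ne', Real.log_exp, Real.log_exp, hx]
  field_simp
  ring

/-- With `x = β m_β`, `β (1 - m_β²) = 2x / sinh 2x`, which is `< 1`. -/
lemma glpF''_pos_of_eq_tanh {β mβ : ℝ} (hβ : 0 < β) (hmβ : 0 < mβ)
    (hroot : mβ = Real.tanh (β * mβ)) : 0 < glpF'' β mβ := by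
  set x := β * mβ with hx
  have hc : 0 < Real.cosh x := Real.cosh_pos x
  have hsinh : mβ * Real.cosh x = Real.sinh x := by
    rw [hroot, Real.tanh_eq_sinh_div_cosh]; field_simp
  have hx2 : x < Real.sinh x * Real.cosh x := by
    have := Real.self_lt_sinh_iff.2 (by positivity : 0 < 2 * x)
    rw [Real.sinh_two_mul] at this; linarith
  have hmβ1 : mβ ^ 2 < 1 := by
    have : mβ < 1 := hroot ▸ Real.tanh_lt_one _
    nlinarith
  have hpos : 0 < β * (1 - mβ ^ 2) := mul_pos hβ (by linarith)
  have hid : (1 - mβ ^ 2) * Real.cosh x ^ 2 = 1 := by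
    linear_combination Real.cosh_sq_sub_sinh_sq x - (mβ * Real.cosh x + Real.sinh x) * hsinh
  rw [glpF'', sub_pos, one_lt_inv₀ hpos]
  refine lt_of_mul_lt_mul_right ?_ (mul_pos hmβ (pow_pos hc 2)).le
  calc β * (1 - mβ ^ 2) * (mβ * Real.cosh x ^ 2) = x * ((1 - mβ ^ 2) * Real.cosh x ^ 2) := by ring
    _ < Real.sinh x * Real.cosh x := by rwa [hid, mul_one]
    _ = 1 * (mβ * Real.cosh x ^ 2) := by rw [← hsinh]; ring

lemma strictMonoOn_glpF' {β : ℝ} (hβ : β ≠ 0) {s : Set ℝ} (hs : Convex ℝ s)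
    (h : ∀ m ∈ s, m ^ 2 < 1 ∧ 0 < glpF'' β m) : StrictMonoOn (glpF' β) s :=
  strictMonoOn_of_hasDerivWithinAt_pos hs
    (fun m hm => (hasDerivAt_glpF' hβ (h m hm).1).continuousAt.continuousWithinAt)
    (fun m hm => (hasDerivAt_glpF' hβ (h m (interior_subset hm)).1).hasDerivWithinAt)
    (fun m hm => (h m (interior_subset hm)).2)

lemma strictAntiOn_glpF' {β : ℝ} (hβ : β ≠ 0) {s : Set ℝ} (hs : Convex ℝ s)
    (h : ∀ m ∈ s, m ^ 2 < 1 ∧ glpF'' β m < 0) : StrictAntiOn (glpF' β) s :=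
  strictAntiOn_of_hasDerivWithinAt_neg hs
    (fun m hm => (hasDerivAt_glpF' hβ (h m hm).1).continuousAt.continuousWithinAt)
    (fun m hm => (hasDerivAt_glpF' hβ (h m (interior_subset hm)).1).hasDerivWithinAt)
    (fun m hm => (h m (interior_subset hm)).2)

lemma glpG_eq {β : ℝ} (hβ : β ≠ 0) (mβ : ℝ) {n : ℝ} (hn : n ^ 2 < 1) (ω : ℝ) :
    glpG β mβ n ω = glpF β mβ (n + ω) - glpF β mβ n - glpF' β n * ω := by
  rw [glpG, (hasDerivAt_glpF hβ mβ hn).deriv]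

lemma glpG_zero (β mβ n : ℝ) : glpG β mβ n 0 = 0 := by simp [glpG]

lemma continuous_glpG (β mβ n : ℝ) : Continuous (glpG β mβ n) := by
  have := continuous_glpF β mβ
  unfold glpG; fun_prop

lemma hasDerivAt_glpG {β : ℝ} (hβ : β ≠ 0) (mβ : ℝ) {n ω : ℝ} (hn : n ^ 2 < 1)
    (hx : (n + ω) ^ 2 < 1) :
    HasDerivAt (glpG β mβ n) (glpF' β (n + ω) - glpF' β n) ω := by
  rw [funext (glpG_eq hβ mβ hn)]
  exact ((((hasDerivAt_glpF hβ mβ hx).comp_const_add n ω).sub_const (glpF β mβ n)).sub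
    ((hasDerivAt_id ω).const_mul (glpF' β n))).congr_deriv (by rw [mul_one])

lemma strictConvexOn_glpG {β : ℝ} (hβ : β ≠ 0) (mβ : ℝ) {n p q : ℝ} (hn : n ^ 2 < 1)
    (h : ∀ x ∈ Ioo p q, x ^ 2 < 1 ∧ 0 < glpF'' β x) :
    StrictConvexOn ℝ (Icc (p - n) (q - n)) (glpG β mβ n) := by
  have hmem : ∀ ω ∈ Ioo (p - n) (q - n), n + ω ∈ Ioo p q := fun ω hω =>
    ⟨by linarith [hω.1], by linarith [hω.2]⟩
  rw [← interior_Icc] at hmem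
  refine strictConvexOn_of_hasDerivAt (convex_Icc _ _) (continuous_glpG β mβ n).continuousOn
    (fun ω hω => hasDerivAt_glpG hβ mβ hn (h _ (hmem ω hω)).1) fun x hx y hy hxy => ?_
  exact sub_lt_sub_right (strictMonoOn_glpF' hβ (convex_Ioo p q) h (hmem x hx) (hmem y hy)
    (by linarith)) _

lemma strictConcaveOn_glpG {β : ℝ} (hβ : β ≠ 0) (mβ : ℝ) {n p q : ℝ} (hn : n ^ 2 < 1)
    (h : ∀ x ∈ Ioo p q, x ^ 2 < 1 ∧ glpF'' β x < 0) :
    StrictConcaveOn ℝ (Icc (p - n) (q - n)) (glpG β mβ n) := by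
  have hmem : ∀ ω ∈ Ioo (p - n) (q - n), n + ω ∈ Ioo p q := fun ω hω =>
    ⟨by linarith [hω.1], by linarith [hω.2]⟩
  rw [← interior_Icc] at hmem
  refine strictConcaveOn_of_hasDerivAt (convex_Icc _ _) (continuous_glpG β mβ n).continuousOn
    (fun ω hω => hasDerivAt_glpG hβ mβ hn (h _ (hmem ω hω)).1) fun x hx y hy hxy => ?_
  exact sub_lt_sub_right (strictAntiOn_glpF' hβ (convex_Ioo p q) h (hmem x hx) (hmem y hy)
    (by linarith)) _

noncomputable def glpInflection (β : ℝ) : ℝ := Real.sqrt (1 - β⁻¹)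

section Inflection

variable {β : ℝ}

lemma glpInflection_sq (hβ : 1 < β) : glpInflection β ^ 2 = 1 - β⁻¹ :=
  Real.sq_sqrt (sub_nonneg.2 (inv_le_one_of_one_le₀ hβ.le))

lemma glpInflection_pos (hβ : 1 < β) : 0 < glpInflection β :=
  Real.sqrt_pos.2 (sub_pos.2 (inv_lt_one_of_one_lt₀ hβ))

lemma glpF''_pos_of_lt_neg_glpInflection (hβ : 1 < β) :
    ∀ x ∈ Ioo (-1) (-glpInflection β), x ^ 2 < 1 ∧ 0 < glpF'' β x := by
  intro x hx
  have ha := glpInflection_pos hβ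
  have hx1 : x ^ 2 < 1 := by nlinarith [hx.1, hx.2]
  refine ⟨hx1, (glpF''_pos_iff (by linarith) hx1).2 ?_⟩
  rw [← glpInflection_sq hβ]; nlinarith [hx.2]

lemma glpF''_neg_of_abs_lt_glpInflection (hβ : 1 < β) :
    ∀ x ∈ Ioo (-glpInflection β) (glpInflection β), x ^ 2 < 1 ∧ glpF'' β x < 0 := by
  intro x hx
  have ha := glpInflection_sq hβ
  have hx2 : x ^ 2 < glpInflection β ^ 2 := by nlinarith [hx.1, hx.2]
  have hx1 : x ^ 2 < 1 := by have := inv_pos.2 (zero_lt_one.trans hβ); linarith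
  exact ⟨hx1, (glpF''_neg_iff (by linarith) hx1).2 (ha ▸ hx2)⟩

lemma glpF''_pos_of_glpInflection_lt (hβ : 1 < β) :
    ∀ x ∈ Ioo (glpInflection β) 1, x ^ 2 < 1 ∧ 0 < glpF'' β x := by
  intro x hx
  have ha := glpInflection_pos hβ
  have hx1 : x ^ 2 < 1 := by nlinarith [hx.1, hx.2]
  refine ⟨hx1, (glpF''_pos_iff (by linarith) hx1).2 ?_⟩
  rw [← glpInflection_sq hβ]; nlinarith [hx.1]

end Inflection

lemma sq_le_glpF {β mβ p κ : ℝ} (hβ : β ≠ 0) (hp : -1 < p) (hpm : p < mβ) (hm1 : mβ < 1)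
    (hF' : glpF' β mβ = 0) (hκ : ∀ m ∈ Ioo p 1, κ ≤ glpF'' β m) {x : ℝ} (hx : x ∈ Icc p 1) :
    κ / 2 * (x - mβ) ^ 2 ≤ glpF β mβ x := by
  have hsq : ∀ m ∈ Ioo p 1, m ^ 2 < 1 := fun m hm => by nlinarith [hm.1, hm.2]
  have hd : ∀ m ∈ Ioo p 1, HasDerivAt (fun m => glpF β mβ m - κ / 2 * (m - mβ) ^ 2)
      (glpF' β m - κ * (m - mβ)) m := fun m hm =>
    ((hasDerivAt_glpF hβ mβ (hsq m hm)).sub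
      ((((hasDerivAt_id m).sub_const mβ).pow 2).const_mul (κ / 2))).congr_deriv
      (by simp only [id]; ring)
  have hd' : ∀ m ∈ Ioo p 1, HasDerivAt (fun m => glpF' β m - κ * (m - mβ))
      (glpF'' β m - κ) m := fun m hm =>
    ((hasDerivAt_glpF' hβ (hsq m hm)).sub
      (((hasDerivAt_id m).sub_const mβ).const_mul κ)).congr_deriv (by simp)
  have hcont := continuous_glpF β mβ
  have hconv : ConvexOn ℝ (Icc p 1) (fun m => glpF β mβ m - κ / 2 * (m - mβ) ^ 2) := by
    refine convexOn_of_hasDerivWithinAt2_nonneg (f' := fun m => glpF' β m - κ * (m - mβ))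
      (f'' := fun m => glpF'' β m - κ) (convex_Icc p 1)
      (Continuous.continuousOn (by fun_prop))
      ?_ ?_ ?_ <;> rw [interior_Icc]
    · exact fun m hm => (hd m hm).hasDerivWithinAt
    · exact fun m hm => (hd' m hm).hasDerivWithinAt
    · exact fun m hm => sub_nonneg.2 (hκ m hm)
  have hmin := hconv.isMinOn_of_rightDeriv_eq_zero (x := mβ)
    (by rw [interior_Icc]; exact ⟨hpm, hm1⟩)
    (by rw [(hd mβ ⟨hpm, hm1⟩).hasDerivWithinAt.derivWithin (uniqueDiffWithinAt_Ioi mβ), hF']; ring)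
  have : glpF β mβ mβ - κ / 2 * (mβ - mβ) ^ 2 ≤ glpF β mβ x - κ / 2 * (x - mβ) ^ 2 := hmin hx
  norm_num [glpF_self] at this
  linarith

lemma antitoneOn_glpF {β mβ a : ℝ} (hβ : β ≠ 0) (hm1 : mβ < 1) (hF' : glpF' β mβ = 0)
    (h : ∀ x ∈ Ioo a 1, x ^ 2 < 1 ∧ 0 < glpF'' β x) : AntitoneOn (glpF β mβ) (Icc a mβ) := by
  refine antitoneOn_of_hasDerivWithinAt_nonpos (convex_Icc a mβ)
    (continuous_glpF β mβ).continuousOn (f' := glpF' β) ?_ ?_ <;> rw [interior_Icc]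
  · exact fun x hx => (hasDerivAt_glpF hβ mβ (h x ⟨hx.1, hx.2.trans hm1⟩).1).hasDerivWithinAt
  · intro x hx
    rw [← hF']
    exact (strictMonoOn_glpF' hβ (convex_Ioo a 1) h ⟨hx.1, hx.2.trans hm1⟩
      ⟨hx.1.trans hx.2, hm1⟩ hx.2).le

lemma glpG_pos_of_le_glpInflection {β mβ n : ℝ} (hβ : 1 < β)
    (hn : n ∈ Ioo (-1) (-glpInflection β)) (haG : 0 < glpG β mβ n (glpInflection β - n)) :
    ∀ ω ∈ Icc (-1 - n) (glpInflection β - n), ω ≠ 0 → 0 < glpG β mβ n ω := by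
  have hβ0 : β ≠ 0 := by linarith
  have ha := glpInflection_pos hβ
  have hn2 := (glpF''_pos_of_lt_neg_glpInflection hβ n hn).1
  have hconv := strictConvexOn_glpG hβ0 mβ hn2 (glpF''_pos_of_lt_neg_glpInflection hβ)
  have hconc := (strictConcaveOn_glpG hβ0 mβ hn2 (glpF''_neg_of_abs_lt_glpInflection hβ)).concaveOn
  have hd0 : HasDerivAt (glpG β mβ n) 0 0 :=
    (hasDerivAt_glpG hβ0 mβ hn2 (by rwa [add_zero])).congr_deriv (by rw [add_zero, sub_self])
  have hpos : ∀ ω ∈ Icc (-1 - n) (-glpInflection β - n), ω ≠ 0 → 0 < glpG β mβ n ω :=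
    fun ω hω hne => glpG_zero β mβ n ▸ hconv.lt_of_hasDerivAt_zero
      ⟨by linarith [hn.1], by linarith [hn.2]⟩ hω hne.symm hd0
  intro ω hω hne
  rcases le_total ω (-glpInflection β - n) with hle | hle
  · exact hpos ω ⟨hω.1, hle⟩ hne
  · exact (lt_min (hpos _ ⟨by linarith [hn.1, hn.2], le_rfl⟩ (by linarith [hn.2])) haG).trans_le
      (hconc.min_le_of_mem_Icc (left_mem_Icc.2 (by linarith)) (right_mem_Icc.2 (by linarith))
        ⟨hle, hω.2⟩)

structure IsSpontaneousMagnetization (β mβ : ℝ) : Prop where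
  one_lt : 1 < β
  pos : 0 < mβ
  lt_one : mβ < 1
  eq_tanh : mβ = Real.tanh (β * mβ)

namespace IsSpontaneousMagnetization

variable {β mβ δ : ℝ}

lemma glpF'_eq_zero (h : IsSpontaneousMagnetization β mβ) : glpF' β mβ = 0 :=
  glpF'_eq_zero_of_eq_tanh (by linarith [h.one_lt]) h.eq_tanh

lemma glpInflection_lt (h : IsSpontaneousMagnetization β mβ) : glpInflection β < mβ := by
  have hpos := glpF''_pos_of_eq_tanh (by linarith [h.one_lt]) h.pos h.eq_tanh
  rw [glpF''_pos_iff (by linarith [h.one_lt]) (by nlinarith [h.pos, h.lt_one]),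
    ← glpInflection_sq h.one_lt] at hpos
  exact (pow_lt_pow_iff_left₀ (glpInflection_pos h.one_lt).le h.pos.le two_ne_zero).1 hpos

lemma glpF'_pos_and_le (h : IsSpontaneousMagnetization β mβ) (hδ : 0 < δ)
    (hδa : δ < mβ - glpInflection β) :
    0 < glpF' β (-mβ + δ) ∧ glpF' β (-mβ + δ) ≤ glpF'' β mβ * δ := by
  have hβ : 0 < β := zero_lt_one.trans h.one_lt
  have hleft := glpF''_pos_of_lt_neg_glpInflection h.one_lt
  have hI : Icc (-mβ) (-mβ + δ) ⊆ Ioo (-1) (-glpInflection β) := fun x hx =>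
    ⟨by linarith [hx.1, h.lt_one], by linarith [hx.2]⟩
  have hmem : ∀ x ∈ Icc (-mβ) (-mβ + δ), x ^ 2 < 1 := fun x hx => (hleft x (hI hx)).1
  have hzero : glpF' β (-mβ) = 0 := by rw [glpF'_neg, h.glpF'_eq_zero, neg_zero]
  refine ⟨hzero ▸ strictMonoOn_glpF' hβ.ne' (convex_Ioo _ _) hleft
    (hI (left_mem_Icc.2 (by linarith))) (hI (right_mem_Icc.2 (by linarith))) (by linarith), ?_⟩
  have := image_sub_le_mul_sub_of_hasDerivAt (by linarith)
    (fun x hx => hasDerivAt_glpF' hβ.ne' (hmem x hx)) fun x hx =>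
      glpF''_le_glpF'' (m₂ := mβ) hβ (by nlinarith [(hI hx).2, hx.1, glpInflection_pos h.one_lt])
        (by nlinarith [h.pos, h.lt_one])
  rw [hzero] at this
  linarith

lemma glpF_le_glpF'_mul (h : IsSpontaneousMagnetization β mβ) (hδ : 0 < δ)
    (hδa : δ < mβ - glpInflection β) :
    glpF β mβ (-mβ + δ) ≤ glpF' β (-mβ + δ) * δ := by
  have hβ : 0 < β := zero_lt_one.trans h.one_lt
  have hleft := glpF''_pos_of_lt_neg_glpInflection h.one_lt
  have hI : Icc (-mβ) (-mβ + δ) ⊆ Ioo (-1) (-glpInflection β) := fun x hx =>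
    ⟨by linarith [hx.1, h.lt_one], by linarith [hx.2]⟩
  have := image_sub_le_mul_sub_of_hasDerivAt (by linarith)
    (fun x hx => hasDerivAt_glpF hβ.ne' mβ (hleft x (hI hx)).1) fun x hx =>
      (strictMonoOn_glpF' hβ.ne' (convex_Ioo _ _) hleft).monotoneOn (hI hx)
        (hI (right_mem_Icc.2 (by linarith))) hx.2
  rw [glpF_neg, glpF_self] at this
  linarith

lemma glpF_add_glpF'_mul_le (h : IsSpontaneousMagnetization β mβ) (hδ : 0 < δ)
    (hδa : δ < mβ - glpInflection β) {ω : ℝ} (hω : ω ≤ 1 - (-mβ + δ)) :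
    glpF β mβ (-mβ + δ) + glpF' β (-mβ + δ) * ω ≤ 2 * glpF'' β mβ * δ := by
  obtain ⟨hpos, hle⟩ := h.glpF'_pos_and_le hδ hδa
  have := h.glpF_le_glpF'_mul hδ hδa
  have := mul_le_mul_of_nonneg_left hω hpos.le
  nlinarith [h.lt_one]

lemma glpG_neg_at_two_mul_sub (h : IsSpontaneousMagnetization β mβ) (hδ : 0 < δ)
    (hδa : δ < mβ - glpInflection β) :
    glpG β mβ (-mβ + δ) (2 * mβ - 2 * δ) < 0 := by
  have hn := (glpF''_pos_of_lt_neg_glpInflection h.one_lt (-mβ + δ)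
    ⟨by linarith [h.lt_one], by linarith⟩).1
  have hsym : -mβ + δ + (2 * mβ - 2 * δ) = -(-mβ + δ) := by ring
  rw [glpG_eq (by linarith [h.one_lt]) mβ hn, hsym, glpF_neg]
  nlinarith [(h.glpF'_pos_and_le hδ hδa).1, glpInflection_pos h.one_lt]

/-- `F` decreases on `[a, m_β]` and lies above the parabola of curvature `κ` on `[a', 1]`, so the
only points of `[a, 1]` where `F` can be `O(δ)` are within `O(√δ)` of `m_β`. -/
lemma le_and_sq_le_of_glpG_nonpos (h : IsSpontaneousMagnetization β mβ) (hδ : 0 < δ)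
    (hδa : δ < mβ - glpInflection β) {a' κ : ℝ} (ha' : glpInflection β ≤ a') (ha'm : a' < mβ)
    (hκ : ∀ m ∈ Ioo a' 1, κ ≤ glpF'' β m)
    (hsmall : 2 * glpF'' β mβ * δ < κ / 2 * (mβ - a') ^ 2) {ω : ℝ}
    (hω : ω ∈ Icc (glpInflection β - (-mβ + δ)) (1 - (-mβ + δ)))
    (hG : glpG β mβ (-mβ + δ) ω ≤ 0) :
    a' ≤ -mβ + δ + ω ∧ κ / 2 * (-mβ + δ + ω - mβ) ^ 2 ≤ 2 * glpF'' β mβ * δ := by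
  have hβ0 : β ≠ 0 := by linarith [h.one_lt]
  have ha := glpInflection_pos h.one_lt
  have hn := (glpF''_pos_of_lt_neg_glpInflection h.one_lt (-mβ + δ)
    ⟨by linarith [h.lt_one], by linarith⟩).1
  have hF : glpF β mβ (-mβ + δ + ω) ≤ 2 * glpF'' β mβ * δ := by
    rw [glpG_eq hβ0 mβ hn] at hG
    linarith [h.glpF_add_glpF'_mul_le hδ hδa hω.2]
  have hquad := fun x (hx : x ∈ Icc a' 1) =>
    sq_le_glpF hβ0 (by linarith) ha'm h.lt_one h.glpF'_eq_zero hκ hx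
  rcases le_or_gt a' (-mβ + δ + ω) with hx | hx
  · exact ⟨hx, (hquad _ ⟨hx, by linarith [hω.2]⟩).trans hF⟩
  · have hanti := antitoneOn_glpF hβ0 h.lt_one h.glpF'_eq_zero
      (glpF''_pos_of_glpInflection_lt h.one_lt)
    have := hanti ⟨by linarith [hω.1], by linarith⟩ ⟨ha', ha'm.le⟩ hx.le
    have := hquad a' ⟨le_rfl, by linarith [h.lt_one]⟩
    nlinarith

lemma exists_zeros_glpG (h : IsSpontaneousMagnetization β mβ) (hδ : 0 < δ)
    (hδa : δ < mβ - glpInflection β) {a' κ : ℝ} (ha' : glpInflection β < a') (ha'm : a' < mβ)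
    (hκ : ∀ m ∈ Ioo a' 1, κ ≤ glpF'' β m)
    (hsmall : 2 * glpF'' β mβ * δ < κ / 2 * (mβ - a') ^ 2)
    (hsmall' : 2 * glpF'' β mβ * δ < κ / 2 * (1 - mβ) ^ 2) :
    ∃ ωm ωp : ℝ, 0 < ωm ∧ ωm < ωp ∧
      {ω ∈ Icc (-1 - (-mβ + δ)) (1 - (-mβ + δ)) | glpG β mβ (-mβ + δ) ω = 0} = {0, ωm, ωp} ∧
      (∀ ω ∈ Icc (-1 - (-mβ + δ)) (1 - (-mβ + δ)),
        (glpG β mβ (-mβ + δ) ω < 0 ↔ ω ∈ Ioo ωm ωp)) ∧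
      κ / 2 * (-mβ + δ + ωm - mβ) ^ 2 ≤ 2 * glpF'' β mβ * δ ∧
      κ / 2 * (-mβ + δ + ωp - mβ) ^ 2 ≤ 2 * glpF'' β mβ * δ := by
  have hβ0 : β ≠ 0 := by linarith [h.one_lt]
  have hm1 := h.lt_one
  have ha := glpInflection_pos h.one_lt
  have hn : -mβ + δ ∈ Ioo (-1) (-glpInflection β) := ⟨by linarith, by linarith⟩
  have hloc := fun ω hω hG =>
    h.le_and_sq_le_of_glpG_nonpos hδ hδa ha'.le ha'm hκ hsmall (ω := ω) hω hG
  have haG : 0 < glpG β mβ (-mβ + δ) (glpInflection β - (-mβ + δ)) := not_le.1 fun hG => by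
    linarith [(hloc _ (left_mem_Icc.2 (by linarith)) hG).1]
  have h1G : 0 < glpG β mβ (-mβ + δ) (1 - (-mβ + δ)) := not_le.1 fun hG => by
    have := (hloc _ (right_mem_Icc.2 (by linarith)) hG).2
    ring_nf at this hsmall'
    linarith
  obtain ⟨ωm, hωm, ωp, hωp, hGm, hGp, hneg, hout⟩ :=
    (strictConvexOn_glpG hβ0 mβ (glpF''_pos_of_lt_neg_glpInflection h.one_lt _ hn).1
      (glpF''_pos_of_glpInflection_lt h.one_lt)).exists_zeros_of_neg
      (continuous_glpG β mβ _).continuousOn haG h1G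
      ⟨by linarith, by linarith⟩ (h.glpG_neg_at_two_mul_sub hδ hδa)
  have hωm' : ωm ∈ Icc (glpInflection β - (-mβ + δ)) (1 - (-mβ + δ)) :=
    ⟨hωm.1.le, by linarith [hωm.2, hωp.1, hωp.2]⟩
  have hωp' : ωp ∈ Icc (glpInflection β - (-mβ + δ)) (1 - (-mβ + δ)) :=
    ⟨by linarith [hωm.1, hωm.2, hωp.1], hωp.2.le⟩
  have hsub : Icc (glpInflection β - (-mβ + δ)) (1 - (-mβ + δ)) ⊆
      Icc (-1 - (-mβ + δ)) (1 - (-mβ + δ)) := Icc_subset_Icc_left (by linarith)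
  obtain ⟨hset, hiff⟩ := zeroSet_eq_and_neg_iff_mem_Ioo
    (show (0 : ℝ) ∈ Icc (-1 - (-mβ + δ)) (1 - (-mβ + δ)) from ⟨by linarith, by linarith⟩)
    (hsub hωm') (hsub hωp') (glpG_zero β mβ _) hGm hGp hneg fun ω hω hne hω' => by
      rcases le_or_gt ω (glpInflection β - (-mβ + δ)) with hle | hgt
      · exact glpG_pos_of_le_glpInflection h.one_lt hn haG ω ⟨hω.1, hle⟩ hne
      · exact hout ω ⟨hgt.le, hω.2⟩ hω'
  exact ⟨ωm, ωp, by linarith [hωm.1], hωm.2.trans hωp.1, hset, hiff,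
    (hloc ωm hωm' hGm.le).2, (hloc ωp hωp' hGp.le).2⟩

end IsSpontaneousMagnetization

/-- For `n = −m_β + δ` with `δ` small, `G = 0` has exactly three solutions `0 < ω₋ < ω₊`,
`G < 0` exactly on `(ω₋, ω₊)`, and `ω₋, ω₊` are within `c√δ` of `2m_β`. -/
theorem stmt8 (β mβ : ℝ) (hβ : 1 < β) (hmβ : 0 < mβ) (hmβ1 : mβ < 1)
    (hroot : mβ = Real.tanh (β * mβ)) :
    ∃ c : ℝ, ∃ δ₀ > 0, ∀ δ : ℝ, 0 < δ → δ < δ₀ →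
      ∃ ωm ωp : ℝ, 0 < ωm ∧ ωm < ωp ∧
        {ω ∈ Set.Icc (-1 - (-mβ + δ)) (1 - (-mβ + δ)) | glpG β mβ (-mβ + δ) ω = 0}
          = {0, ωm, ωp} ∧
        (∀ ω ∈ Set.Icc (-1 - (-mβ + δ)) (1 - (-mβ + δ)),
          (glpG β mβ (-mβ + δ) ω < 0 ↔ ω ∈ Set.Ioo ωm ωp)) ∧
        |ωm - 2 * mβ| ≤ c * Real.sqrt δ ∧ |ωp - 2 * mβ| ≤ c * Real.sqrt δ := by
  have h : IsSpontaneousMagnetization β mβ := ⟨hβ, hmβ, hmβ1, hroot⟩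
  have ha := h.glpInflection_lt
  set a' := (glpInflection β + mβ) / 2 with ha'
  have ha'₁ : glpInflection β < a' := by rw [ha']; linarith
  have ha'₂ : a' < mβ := by rw [ha']; linarith
  have ha₀ := glpInflection_pos hβ
  set κ := glpF'' β a'
  set L := glpF'' β mβ
  set η := min (mβ - a') (1 - mβ)
  have hκ : ∀ m ∈ Ioo a' 1, κ ≤ glpF'' β m := fun m hm =>
    glpF''_le_glpF'' (by linarith) (by nlinarith [hm.1]) (by nlinarith [hm.1, hm.2])
  have hκ0 : 0 < κ := (glpF''_pos_of_glpInflection_lt hβ a' ⟨by linarith, by linarith⟩).2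
  have hL : 0 < L := glpF''_pos_of_eq_tanh (by linarith) hmβ hroot
  have hη : 0 < η := lt_min (by linarith) (by linarith)
  refine ⟨Real.sqrt (4 * L / κ) + 1, min (mβ - glpInflection β) (min 1 (κ * η ^ 2 / (4 * L))),
    lt_min (by linarith) (lt_min one_pos (by positivity)), fun δ hδ hδ₀ => ?_⟩
  obtain ⟨hδa, hδ1, hδη⟩ : δ < mβ - glpInflection β ∧ δ < 1 ∧ δ < κ * η ^ 2 / (4 * L) := by
    simpa only [lt_min_iff] using hδ₀
  rw [lt_div_iff₀ (by positivity)] at hδη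
  have hη₁ : η ^ 2 ≤ (mβ - a') ^ 2 := pow_le_pow_left₀ hη.le (min_le_left _ _) 2
  have hη₂ : η ^ 2 ≤ (1 - mβ) ^ 2 := pow_le_pow_left₀ hη.le (min_le_right _ _) 2
  obtain ⟨ωm, ωp, hωm, hωmp, hzeros, hneg, hm, hp⟩ :=
    h.exists_zeros_glpG hδ hδa ha'₁ ha'₂ hκ (by nlinarith) (by nlinarith)
  exact ⟨ωm, ωp, hωm, hωmp, hzeros, hneg, abs_sub_le_of_sq_le hκ0 hδ hδ1.le hm,
    abs_sub_le_of_sq_le hκ0 hδ hδ1.le hp⟩
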